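/- arXiv:1905.12813 — 2 statements merged into one kernel-verified Lean document; each statement's English description precedes it below -/
import Mathlib

section
/- Let X be a finite type, let t and η be integers with 2 ≤ t ≤ η, and for each i ∈ {1, …, t} let φᵢ, φ̃ᵢ : X → ℝ take values in [0,1]. Let δ* ≥ 0 satisfy |φᵢ(x) − φ̃ᵢ(x)| ≤ δ* for all i ∈ {2, …, t} and all x ∈ X. Then |∑_{x∈X} ∏_{i=1}^t φᵢ(x) − ∑_{x∈X} ∏_{i=1}^t φ̃ᵢ(x)| ≤ ∑_{x∈X} |φ₁(x) − φ̃₁(x)| + η · δ* · ∑_{x∈X} φ̃₁(x). -/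
lemma abs_prod_sub_prod_le {ι : Type*} (s : Finset ι) (a b : ι → ℝ)
    (ha : ∀ i ∈ s, 0 ≤ a i ∧ a i ≤ 1) (hb : ∀ i ∈ s, 0 ≤ b i ∧ b i ≤ 1) :
    |∏ i ∈ s, a i - ∏ i ∈ s, b i| ≤ ∑ i ∈ s, |a i - b i| := by
  classical
  induction s using Finset.induction_on with
  | empty => simp
    | @insert j s' hnot ih =>
    rw [Finset.prod_insert hnot, Finset.prod_insert hnot, Finset.sum_insert hnot]
    have haj := ha j (Finset.mem_insert_self _ _)
    have hbj := hb j (Finset.mem_insert_self _ _)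
    have ha' : ∀ i ∈ s', 0 ≤ a i ∧ a i ≤ 1 := fun i hi => ha i (Finset.mem_insert_of_mem hi)
    have hb' : ∀ i ∈ s', 0 ≤ b i ∧ b i ≤ 1 := fun i hi => hb i (Finset.mem_insert_of_mem hi)
    have hPa : 0 ≤ ∏ i ∈ s', a i := Finset.prod_nonneg fun i hi => (ha' i hi).1
    have hPa1 : ∏ i ∈ s', a i ≤ 1 := Finset.prod_le_one (fun i hi => (ha' i hi).1) (fun i hi => (ha' i hi).2)
    have key : a j * ∏ i ∈ s', a i - b j * ∏ i ∈ s', b i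
        = (a j - b j) * ∏ i ∈ s', a i + b j * (∏ i ∈ s', a i - ∏ i ∈ s', b i) := by ring
    rw [key]
    calc |(a j - b j) * ∏ i ∈ s', a i + b j * (∏ i ∈ s', a i - ∏ i ∈ s', b i)|
        ≤ |(a j - b j) * ∏ i ∈ s', a i| + |b j * (∏ i ∈ s', a i - ∏ i ∈ s', b i)| := abs_add_le _ _
      _ ≤ |a j - b j| * 1 + 1 * |∏ i ∈ s', a i - ∏ i ∈ s', b i| := by
          rw [abs_mul, abs_mul]
          gcongr
          · rw [abs_of_nonneg hPa]; exact hPa1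
          · rw [abs_of_nonneg hbj.1]; exact hbj.2
      _ ≤ |a j - b j| + ∑ i ∈ s', |a i - b i| := by
          rw [mul_one, one_mul]; gcongr; exact ih ha' hb'


/-- Per-assignment error bound for a sum-product term of variable elimination
(Equation (eq1) in the proof of Theorem 4.2): indexing the `t` factors by `Fin t`
(so `φ ⟨0,_⟩` is the first factor `φ₁`, and indices `i ≠ ⟨0,_⟩` correspond to
`i ∈ {2,…,t}`), if all factor entries lie in `[0,1]` and `|φᵢ(x) − φ̃ᵢ(x)| ≤ δ*` for all
`i ∈ {2,…,t}` and all `x`, then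
`|∑ₓ ∏ᵢ φᵢ(x) − ∑ₓ ∏ᵢ φ̃ᵢ(x)| ≤ ∑ₓ |φ₁(x) − φ̃₁(x)| + η·δ*·∑ₓ φ̃₁(x)`. -/
theorem sum_product_error_single (X : Type*) [Fintype X]
    (t η : ℕ) (ht : 2 ≤ t) (htη : t ≤ η)
    (φ φt : Fin t → X → ℝ)
    (hφ : ∀ i x, 0 ≤ φ i x ∧ φ i x ≤ 1)
    (hφt : ∀ i x, 0 ≤ φt i x ∧ φt i x ≤ 1)
    (δstar : ℝ) (hδstar : 0 ≤ δstar)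
    (herr : ∀ i : Fin t, i ≠ ⟨0, by omega⟩ → ∀ x : X, |φ i x - φt i x| ≤ δstar) :
    |∑ x : X, ∏ i, φ i x - ∑ x : X, ∏ i, φt i x| ≤
      ∑ x : X, |φ (⟨0, by omega⟩ : Fin t) x - φt (⟨0, by omega⟩ : Fin t) x| +
        (η : ℝ) * δstar * ∑ x : X, φt (⟨0, by omega⟩ : Fin t) x := by
  classical
  set z : Fin t := ⟨0, by omega⟩ with hz
  have pointwise : ∀ x : X, |∏ i, φ i x - ∏ i, φt i x|
      ≤ |φ z x - φt z x| + (η : ℝ) * δstar * φt z x := by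
    intro x
    have hz' : z ∈ Finset.univ := Finset.mem_univ z
    rw [← Finset.mul_prod_erase Finset.univ (fun i => φ i x) hz',
        ← Finset.mul_prod_erase Finset.univ (fun i => φt i x) hz']
    set P := ∏ i ∈ Finset.univ.erase z, φ i x
    set Q := ∏ i ∈ Finset.univ.erase z, φt i x
    have hP : 0 ≤ P ∧ P ≤ 1 :=
      ⟨Finset.prod_nonneg fun i _ => (hφ i x).1,
       Finset.prod_le_one (fun i _ => (hφ i x).1) (fun i _ => (hφ i x).2)⟩
    have hPQ : |P - Q| ≤ (η : ℝ) * δstar := by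
      calc |P - Q| ≤ ∑ i ∈ Finset.univ.erase z, |φ i x - φt i x| :=
            abs_prod_sub_prod_le _ _ _ (fun i _ => hφ i x) (fun i _ => hφt i x)
        _ ≤ ∑ _i ∈ Finset.univ.erase z, δstar := by
            apply Finset.sum_le_sum
            intro i hi
            exact herr i (Finset.ne_of_mem_erase hi) x
        _ = ((Finset.univ.erase z).card : ℝ) * δstar := by rw [Finset.sum_const, nsmul_eq_mul]
        _ ≤ (η : ℝ) * δstar := by
            apply mul_le_mul_of_nonneg_right _ hδstar
            have : (Finset.univ.erase z).card = t - 1 := by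
              rw [Finset.card_erase_of_mem hz', Finset.card_univ, Fintype.card_fin]
            rw [this]
            exact_mod_cast Nat.le_trans (by omega) htη
    have key : φ z x * P - φt z x * Q = (φ z x - φt z x) * P + φt z x * (P - Q) := by ring
    rw [key]
    calc |(φ z x - φt z x) * P + φt z x * (P - Q)|
        ≤ |(φ z x - φt z x) * P| + |φt z x * (P - Q)| := abs_add_le _ _
      _ ≤ |φ z x - φt z x| * 1 + φt z x * ((η:ℝ) * δstar) := by
          rw [abs_mul, abs_mul, abs_of_nonneg (hφt z x).1]
          gcongr
          · rw [abs_of_nonneg hP.1]; exact hP.2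
          · exact (hφt z x).1
      _ = |φ z x - φt z x| + (η:ℝ) * δstar * φt z x := by ring
  calc |∑ x : X, ∏ i, φ i x - ∑ x : X, ∏ i, φt i x|
      = |∑ x : X, (∏ i, φ i x - ∏ i, φt i x)| := by rw [Finset.sum_sub_distrib]
    _ ≤ ∑ x : X, |∏ i, φ i x - ∏ i, φt i x| := Finset.abs_sum_le_sum_abs _ _
    _ ≤ ∑ x : X, (|φ z x - φt z x| + (η:ℝ) * δstar * φt z x) :=
        Finset.sum_le_sum fun x _ => pointwise x
    _ = ∑ x : X, |φ z x - φt z x| + (η:ℝ) * δstar * ∑ x : X, φt z x := by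
        rw [Finset.sum_add_distrib, Finset.mul_sum]
end

section
/- Let n ≥ 1, let a₁, …, a_n be positive reals and let E > 0. Define ε*ᵢ = E · sqrt(aᵢ) / (∑_{j=1}^n sqrt(aⱼ)) for i = 1, …, n. Then each ε*ᵢ > 0, ∑_{i=1}^n ε*ᵢ = E, the objective value satisfies ∑_{i=1}^n aᵢ/ε*ᵢ = (∑_{i=1}^n sqrt(aᵢ))² / E, and for every positive ε₁, …, ε_n with ∑_{i=1}^n εᵢ = E one has ∑_{i=1}^n aᵢ/ε*ᵢ ≤ ∑_{i=1}^n aᵢ/εᵢ; i.e., ε* minimizes ∑ aᵢ/εᵢ over the feasible set. -/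
/-!
Cauchy–Schwarz (Sedrakyan's form) gives `(∑ √aᵢ)² / ∑ εᵢ ≤ ∑ aᵢ / εᵢ` for every positive
allocation `ε`, so `(∑ √aᵢ)² / E` is a lower bound on the objective over the feasible set.
The allocation proportional to `√aᵢ` turns every summand `aᵢ / εᵢ` into `√aᵢ · (∑ √aⱼ) / E`,
hence attains that bound.
-/

open Finset Real

section

variable {ι : Type*} (s : Finset ι)

theorem sum_mul_div_sum_eq {w : ι → ℝ} (hw : ∑ j ∈ s, w j ≠ 0) (E : ℝ) :
    ∑ i ∈ s, E * w i / ∑ j ∈ s, w j = E := by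
  rw [← sum_div, ← mul_sum, mul_div_assoc, div_self hw, mul_one]

theorem div_mul_sqrt_div_eq {a : ℝ} (ha : 0 < a) {E : ℝ} (hE : E ≠ 0) (S : ℝ) :
    a / (E * √a / S) = √a * S / E := by
  have hsqrt : √a ≠ 0 := (sqrt_pos.2 ha).ne'
  rw [div_div_eq_mul_div, div_eq_div_iff (mul_ne_zero hE hsqrt) hE]
  nth_rewrite 1 [← mul_self_sqrt ha.le]
  ring

theorem sum_div_sqrt_allocation_eq {a : ι → ℝ} (ha : ∀ i ∈ s, 0 < a i) {E : ℝ} (hE : E ≠ 0) :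
    ∑ i ∈ s, a i / (E * √(a i) / ∑ j ∈ s, √(a j)) = (∑ i ∈ s, √(a i)) ^ 2 / E := by
  rw [sum_congr rfl fun i hi => div_mul_sqrt_div_eq (ha i hi) hE _, ← sum_div, ← sum_mul, sq]

theorem sq_sum_sqrt_div_sum_le_sum_div {a : ι → ℝ} (ha : ∀ i ∈ s, 0 ≤ a i) {ε : ι → ℝ}
    (hε : ∀ i ∈ s, 0 < ε i) :
    (∑ i ∈ s, √(a i)) ^ 2 / ∑ i ∈ s, ε i ≤ ∑ i ∈ s, a i / ε i := by
  calc (∑ i ∈ s, √(a i)) ^ 2 / ∑ i ∈ s, ε i ≤ ∑ i ∈ s, √(a i) ^ 2 / ε i :=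
        sq_sum_div_le_sum_sq_div s _ hε
    _ = ∑ i ∈ s, a i / ε i := sum_congr rfl fun i hi => by rw [sq_sqrt (ha i hi)]

end

/-- Closed-form optimal privacy-budget allocation (Equation (sol) of the paper):
for positive weights `aᵢ` and total budget `E > 0`, the allocation
`ε*ᵢ = E·sqrt(aᵢ)/∑ⱼ sqrt(aⱼ)` is positive, sums to `E`, achieves objective value
`(∑ sqrt(aᵢ))²/E`, and minimizes `∑ aᵢ/εᵢ` over all positive allocations summing
to `E`. -/
theorem budget_allocation_optimal (n : ℕ) (hn : 1 ≤ n)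
    (a : Fin n → ℝ) (ha : ∀ i, 0 < a i)
    (E : ℝ) (hE : 0 < E) :
    (∀ i, 0 < E * Real.sqrt (a i) / ∑ j, Real.sqrt (a j)) ∧
    (∑ i, E * Real.sqrt (a i) / ∑ j, Real.sqrt (a j)) = E ∧
    (∑ i, a i / (E * Real.sqrt (a i) / ∑ j, Real.sqrt (a j))) =
      (∑ i, Real.sqrt (a i)) ^ 2 / E ∧
    (∀ ε : Fin n → ℝ, (∀ i, 0 < ε i) → (∑ i, ε i) = E →
      (∑ i, a i / (E * Real.sqrt (a i) / ∑ j, Real.sqrt (a j))) ≤ ∑ i, a i / ε i) := by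
  have hsqrt : ∀ i, 0 < √(a i) := fun i => sqrt_pos.2 (ha i)
  have hS : 0 < ∑ j, √(a j) :=
    sum_pos (fun i _ => hsqrt i) (univ_nonempty_iff.2 ⟨⟨0, hn⟩⟩)
  have hobj := sum_div_sqrt_allocation_eq univ (fun i _ => ha i) hE.ne'
  refine ⟨fun i => div_pos (mul_pos hE (hsqrt i)) hS, sum_mul_div_sum_eq univ hS.ne' E, hobj,
    fun ε hε hεE => ?_⟩
  rw [hobj, ← hεE]
  exact sq_sum_sqrt_div_sum_le_sum_div univ (fun i _ => (ha i).le) fun i _ => hε i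
end
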